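/- arXiv:1611.09017 — 6 statements merged into one kernel-verified Lean document; each statement's English description precedes it below -/
import Mathlib

section
/- A binary word w is 1-prefix normal if and only if for all 0 ≤ i ≤ j ≤ |w|, P₁(w, j) − P₁(w, i) ≤ P₁(w, j − i). -/
/-- `w` is 1-prefix normal: no factor of `w` has more 1s than the prefix of the same length. -/
def IsPrefixNormal1 (w : List Bool) : Prop :=
  ∀ v : List Bool, v <:+: w → v.count true ≤ (w.take v.length).count true

/-- Number of 1s in the length-`k` prefix of `w`. -/
def P1 (w : List Bool) (k : ℕ) : ℕ := (w.take k).count true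

/-! Every factor of `w` is the window `(w.drop i).take (j - i)` for some `i ≤ j ≤ |w|`, and that
window contains exactly `P₁(w, j) - P₁(w, i)` ones. -/

theorem List.count_take_add {α : Type*} [BEq α] (l : List α) (a : α) (i n : ℕ) :
    (l.take (i + n)).count a = (l.take i).count a + ((l.drop i).take n).count a := by
  rw [List.take_add, List.count_append]

theorem P1_add (w : List Bool) (i n : ℕ) :
    P1 w (i + n) = P1 w i + ((w.drop i).take n).count true :=
  w.count_take_add true i n

theorem List.IsInfix.exists_eq_take_drop {α : Type*} {v w : List α} (h : v <:+: w) :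
    ∃ i, i + v.length ≤ w.length ∧ v = (w.drop i).take v.length := by
  obtain ⟨s, t, rfl⟩ := h
  exact ⟨s.length, by simp, by simp⟩

theorem List.take_drop_infix {α : Type*} (w : List α) (i n : ℕ) : (w.drop i).take n <:+: w :=
  ((w.drop i).take_prefix n).isInfix.trans (w.drop_suffix i).isInfix

theorem isPrefixNormal1_iff_factor_count_le (w : List Bool) :
    IsPrefixNormal1 w ↔
      ∀ i n, i + n ≤ w.length → ((w.drop i).take n).count true ≤ P1 w n := by
  constructor
  · intro hw i n hin
    have hlen : ((w.drop i).take n).length = n := by simp only [List.length_take, List.length_drop]; omega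
    have := hw _ (w.take_drop_infix i n)
    rwa [hlen] at this
  · intro h v hv
    obtain ⟨i, hi, hv⟩ := hv.exists_eq_take_drop
    exact (congrArg (List.count true) hv).le.trans (h i v.length hi)

theorem stmt_8 (w : List Bool) :
    IsPrefixNormal1 w ↔
      ∀ i j, i ≤ j → j ≤ w.length → P1 w j - P1 w i ≤ P1 w (j - i) := by
  rw [isPrefixNormal1_iff_factor_count_le]
  constructor
  · intro h i j hij hj
    obtain ⟨n, rfl⟩ := Nat.exists_eq_add_of_le hij
    rw [Nat.add_sub_cancel_left, P1_add]
    have := h i n hj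
    omega
  · intro h i n hin
    have := h i (i + n) (Nat.le_add_right i n) hin
    rw [Nat.add_sub_cancel_left, P1_add] at this
    omega
end

section
/- A binary word w is 1-prefix normal if and only if every factor v of w with |v|₁ = i satisfies |v| ≥ pos₁(w, i), where pos₁(w, i) is the position of the i-th occurrence of 1 in w. -/
/-- Position of the `i`-th 1 in `w`: least `k` such that the length-`k` prefix contains `i` ones. -/
noncomputable def pos1 (w : List Bool) (i : ℕ) : ℕ :=
  sInf {k : ℕ | ((w.take k).count true) = i}

/-!
The prefix count `k ↦ |take k w|₁` starts at `0`, is monotone and grows by at most one per step,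
so it takes every value up to its current one. Hence, for `i ≤ |w|₁`, `pos₁(w, i) ≤ n` holds
exactly when the length-`n` prefix has at least `i` ones; with `n = |v|` and `i = |v|₁` this is
the defining inequality of prefix normality.
-/

theorem Nat.exists_eq_of_le_of_map_succ_le {f : ℕ → ℕ} (h0 : f 0 = 0)
    (hf : ∀ k, f (k + 1) ≤ f k + 1) {n i : ℕ} (hi : i ≤ f n) : ∃ k ≤ n, f k = i := by
  induction n with
  | zero => exact ⟨0, le_rfl, by omega⟩
  | succ n ih =>
    by_cases hin : i ≤ f n
    · obtain ⟨k, hkn, hk⟩ := ih hin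
      exact ⟨k, by omega, hk⟩
    · exact ⟨n + 1, le_rfl, by have := hf n; omega⟩

namespace List

variable {α : Type*} [BEq α] (l : List α) (a : α)

theorem count_take_succ_le (k : ℕ) : (l.take (k + 1)).count a ≤ (l.take k).count a + 1 := by
  rw [take_add_one, count_append]
  have : (l[k]?.toList).count a ≤ 1 := count_le_length.trans (by cases l[k]? <;> simp)
  omega

theorem monotone_count_take : Monotone fun k => (l.take k).count a :=
  fun _ _ hmn => (take_prefix_take_left hmn).sublist.count_le a

theorem exists_count_take_eq {n i : ℕ} (hi : i ≤ (l.take n).count a) :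
    ∃ k ≤ n, (l.take k).count a = i :=
  Nat.exists_eq_of_le_of_map_succ_le (by simp) (count_take_succ_le l a) hi

end List

theorem pos1_le {w : List Bool} {i k : ℕ} (h : (w.take k).count true = i) : pos1 w i ≤ k :=
  Nat.sInf_le h

theorem count_take_pos1 {w : List Bool} {i : ℕ} (hi : i ≤ w.count true) :
    (w.take (pos1 w i)).count true = i := by
  obtain ⟨k, -, hk⟩ := w.exists_count_take_eq true (n := w.length) (by simpa using hi)
  exact Nat.sInf_mem (s := {k | (w.take k).count true = i}) ⟨k, hk⟩

theorem pos1_le_iff {w : List Bool} {i n : ℕ} (hi : i ≤ w.count true) :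
    pos1 w i ≤ n ↔ i ≤ (w.take n).count true := by
  refine ⟨fun hn => count_take_pos1 hi ▸ w.monotone_count_take true hn, fun hn => ?_⟩
  obtain ⟨k, hkn, hk⟩ := w.exists_count_take_eq true hn
  exact (pos1_le hk).trans hkn

theorem stmt_9 (w : List Bool) :
    IsPrefixNormal1 w ↔
      ∀ v : List Bool, v <:+: w → pos1 w (v.count true) ≤ v.length :=
  forall₂_congr fun _ hv => (pos1_le_iff (hv.sublist.count_le true)).symm
end

section
/- Let w be a 1-prefix normal word. Then w·1 is 1-prefix normal if and only if for every 0 ≤ k < |w|, the number of 1s in the suffix of w of length k is strictly less than the number of 1s in the prefix of w of length k+1. -/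
theorem stmt_14 (w : List Bool) (hw : IsPrefixNormal1 w) :
    IsPrefixNormal1 (w ++ [true]) ↔
      ∀ k < w.length,
        ((w.drop (w.length - k)).count true) < ((w.take (k + 1)).count true) := by
  constructor
  · intro h k hk
    have hsuf : (w.drop (w.length - k)) ++ [true] <:+: w ++ [true] := by
      obtain ⟨t, ht⟩ := List.drop_suffix (w.length - k) w
      exact List.IsSuffix.isInfix ⟨t, by rw [← List.append_assoc, ht]⟩
    have hlen : (w.drop (w.length - k)).length = k := by
      rw [List.length_drop]; omega
    have := h _ hsuf
    rw [List.length_append, hlen, List.count_append] at this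
    simp only [List.length_singleton, List.count_singleton] at this
    rw [List.take_append_of_le_length (by omega)] at this
    simpa using this
  · intro h v hv
    obtain ⟨s, t, hst⟩ := hv
    rcases List.eq_nil_or_concat t with rfl | ⟨t', x, rfl⟩ <;> [skip; rw [List.concat_eq_append] at hst]
    · -- v is a suffix of w ++ [true]
      rw [List.append_nil] at hst
      rcases List.eq_nil_or_concat v with rfl | ⟨v', b, rfl⟩
      · simp
      · rw [List.concat_eq_append] at hst ⊢
        rw [← List.append_assoc] at hst
        have h2 := List.append_inj' hst rfl
        obtain ⟨hsw, hb⟩ := h2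
        have hb' : b = true := by simpa using hb
        subst hb'
        have hlenv : v'.length ≤ w.length := by
          have := congrArg List.length hsw
          simp at this; omega
        rcases eq_or_lt_of_le hlenv with heq | hlt
        · -- v' has full length, so s = [], v' = w
          have hs : s = [] := by
            have := congrArg List.length hsw
            simp at this
            exact List.eq_nil_of_length_eq_zero (by omega)
          subst hs
          simp only [List.nil_append] at hsw
          subst hsw
          rw [List.take_length]
        · have hk := h v'.length hlt
          have hv'eq : v' = w.drop (w.length - v'.length) := by
            have hs : s.length = w.length - v'.length := by
              have := congrArg List.length hsw
              simp at this; omega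
            rw [← hs, ← hsw, List.drop_left]
          have hc : List.count true v' = List.count true (w.drop (w.length - v'.length)) := by
            conv_lhs => rw [hv'eq]
          have h1 : List.count true [true] = 1 := rfl
          have h2 : ([true] : List Bool).length = 1 := rfl
          rw [List.count_append, List.length_append, h1, h2,
            List.take_append_of_le_length (by omega)]
          omega
    · -- v is an infix of w
      have hst' : (s ++ v ++ t') ++ [x] = w ++ [true] := by
        simpa [List.append_assoc] using hst
      have h2 := List.append_inj' hst' rfl
      obtain ⟨hsw, _⟩ := h2
      have hinf : v <:+: w := ⟨s, t', hsw⟩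
      have := hw v hinf
      have hlenv : v.length ≤ w.length := hinf.length_le
      rwa [List.take_append_of_le_length hlenv]
end

section
/- The language of 1-prefix normal binary words is not context-free. -/
open Relation

theorem List.foldr_max_le_iff {l : List ℕ} {a : ℕ} :
    l.foldr max 0 ≤ a ↔ ∀ x ∈ l, x ≤ a := by
  induction l <;> simp_all

inductive ParseTree (T N : Type*) where
  | leaf : T → ParseTree T N
  | node : N → List (ParseTree T N) → ParseTree T N

namespace ParseTree

variable {T N : Type*} {s t : ParseTree T N}

@[elab_as_elim, induction_eliminator]
theorem induction_mem {P : ParseTree T N → Prop} (leaf : ∀ a, P (leaf a))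
    (node : ∀ n c, (∀ b ∈ c, P b) → P (node n c)) : ∀ t, P t
  | .leaf a => leaf a
  | .node n c => node n c fun b _ => induction_mem leaf node b

def root : ParseTree T N → Symbol T N
  | leaf a => .terminal a
  | node n _ => .nonterminal n

def yield : ParseTree T N → List T
  | leaf a => [a]
  | node _ c => (c.map yield).flatten

def height : ParseTree T N → ℕ
  | leaf _ => 0
  | node _ c => (c.map height).foldr max 0 + 1

def size : ParseTree T N → ℕ
  | leaf _ => 1
  | node _ c => (c.map size).sum + 1

def IsChild (s t : ParseTree T N) : Prop :=
  ∃ n c, t = node n c ∧ s ∈ c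

theorem height_lt_of_isChild (h : IsChild s t) : s.height < t.height := by
  obtain ⟨n, c, rfl, hs⟩ := h
  simpa [height, Nat.lt_succ_iff] using List.foldr_max_le_iff.1 le_rfl _ (List.mem_map_of_mem hs)

theorem size_lt_of_isChild (h : IsChild s t) : s.size < t.size := by
  obtain ⟨n, c, rfl, hs⟩ := h
  simpa [size, Nat.lt_succ_iff] using List.le_sum_of_mem (List.mem_map_of_mem (f := size) hs)

theorem height_le_of_reflTransGen (h : ReflTransGen IsChild s t) : s.height ≤ t.height := by
  induction h with
  | refl => rfl
  | tail _ hchild ih => exact ih.trans (height_lt_of_isChild hchild).le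

theorem size_lt_of_transGen (h : TransGen IsChild s t) : s.size < t.size := by
  induction h with
  | single hchild => exact size_lt_of_isChild hchild
  | tail _ hchild ih => exact ih.trans (size_lt_of_isChild hchild)

theorem exists_reflTransGen_height_eq {k : ℕ} (hk₀ : 0 < k) :
    ∀ t : ParseTree T N, k ≤ t.height → ∃ s, ReflTransGen IsChild s t ∧ s.height = k := by
  intro t
  induction t with
  | leaf => exact fun hk => ⟨_, .refl, by simp_all [height]⟩
  | node n c ih =>
    intro hk
    rcases hk.eq_or_lt with hk | hk
    · exact ⟨_, .refl, hk.symm⟩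
    · have : ∃ b ∈ c, k ≤ b.height := by
        by_contra! hlt
        have : (c.map height).foldr max 0 ≤ k - 1 := by
          simpa [List.foldr_max_le_iff] using fun b hb => Nat.le_sub_one_of_lt (hlt b hb)
        simp only [height] at hk
        omega
      obtain ⟨b, hb, hkb⟩ := this
      obtain ⟨s, hs, rfl⟩ := ih b hb hkb
      exact ⟨s, hs.tail ⟨n, c, rfl, hb⟩, rfl⟩

theorem height_le_card (A : Finset N) :
    ∀ t : ParseTree T N, (∀ n c, ReflTransGen IsChild (node n c) t → n ∈ A) →
      (∀ t₁ t₂, ReflTransGen IsChild t₁ t → TransGen IsChild t₂ t₁ → t₂.root ≠ t₁.root) →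
      t.height ≤ A.card := by
  classical
  intro t
  induction t generalizing A with
  | leaf => simp [height]
  | node n c ih =>
    intro hlabel hnorep
    have hn : n ∈ A := hlabel n c .refl
    have hchild : ∀ b ∈ c, b.height ≤ (A.erase n).card := by
      intro b hb
      have hbt : IsChild b (node n c) := ⟨n, c, rfl, hb⟩
      refine ih b hb _ (fun m d hd => Finset.mem_erase.2 ⟨?_, hlabel m d (hd.tail hbt)⟩)
        (fun t₁ t₂ h₁ h₂ => hnorep t₁ t₂ (h₁.tail hbt) h₂)
      rintro rfl
      exact hnorep _ _ .refl (TransGen.tail' hd hbt) rfl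
    rw [Finset.card_erase_of_mem hn] at hchild
    have : (c.map height).foldr max 0 ≤ A.card - 1 := by
      simpa [List.foldr_max_le_iff] using hchild
    have := Finset.card_pos.2 ⟨n, hn⟩
    simp only [height]
    omega

end ParseTree

namespace ContextFreeGrammar

open ParseTree

variable {T : Type*} {g : ContextFreeGrammar T} {s t : ParseTree T g.NT}

inductive IsParseTree (g : ContextFreeGrammar T) : ParseTree T g.NT → Prop
  | leaf (a : T) : IsParseTree g (.leaf a)
  | node (r : ContextFreeRule T g.NT) (c : List (ParseTree T g.NT)) (hr : r ∈ g.rules)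
      (hc : c.map root = r.output) (hsub : ∀ b ∈ c, IsParseTree g b) :
      IsParseTree g (.node r.input c)

theorem IsParseTree.of_isChild (ht : g.IsParseTree t) (h : IsChild s t) : g.IsParseTree s := by
  obtain ⟨n, c, rfl, hs⟩ := h
  cases ht with
  | node _ _ _ _ hsub => exact hsub s hs

theorem IsParseTree.of_reflTransGen (ht : g.IsParseTree t) (h : ReflTransGen IsChild s t) :
    g.IsParseTree s := by
  induction h using ReflTransGen.head_induction_on with
  | refl => exact ht
  | head hchild _ ih => exact ih.of_isChild hchild

theorem IsParseTree.exists_rule {n : g.NT} {c : List (ParseTree T g.NT)}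
    (ht : g.IsParseTree (.node n c)) : ∃ r ∈ g.rules, r.input = n := by
  cases ht with
  | node r _ hr _ _ => exact ⟨r, hr, rfl⟩

theorem derives_map_root {c : List (ParseTree T g.NT)}
    (h : ∀ b ∈ c, g.Derives [b.root] (b.yield.map .terminal)) :
    g.Derives (c.map root) ((c.map yield).flatten.map .terminal) := by
  induction c with
  | nil => rfl
  | cons b c ih =>
    simp only [List.forall_mem_cons] at h
    simpa using (h.1.append_right (c.map root)).trans
      ((ih h.2).append_left (b.yield.map .terminal))

theorem IsParseTree.derives (ht : g.IsParseTree t) :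
    g.Derives [t.root] (t.yield.map .terminal) := by
  induction ht with
  | leaf => simp only [root, yield, List.map_cons, List.map_nil]; rfl
  | node r c hr hc _ ih =>
    have hstep : g.Produces [.nonterminal r.input] r.output :=
      ⟨r, hr, ContextFreeRule.Rewrites.input_output⟩
    rw [root, yield]
    exact hstep.trans_derives (hc ▸ derives_map_root ih)

theorem exists_parseTrees_of_derives {u : List (Symbol T g.NT)} {w : List T}
    (h : g.Derives u (w.map .terminal)) :
    ∃ c : List (ParseTree T g.NT), c.map root = u ∧ (c.map yield).flatten = w ∧
      ∀ b ∈ c, g.IsParseTree b := by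
  induction h using ReflTransGen.head_induction_on with
  | refl =>
    exact ⟨w.map .leaf, by simp [Function.comp_def, root], by induction w <;> simp_all [yield],
      by simpa using fun a _ => IsParseTree.leaf a⟩
  | head hp _ ih =>
    obtain ⟨c, hc, rfl, hsub⟩ := ih
    obtain ⟨r, hr, hrw⟩ := hp
    obtain ⟨p, q, rfl, rfl⟩ := hrw.exists_parts
    obtain ⟨c₁, c₂₃, rfl, rfl, hc₂₃⟩ :=
      List.map_eq_append_iff.1 (hc.trans (List.append_assoc ..))
    obtain ⟨c₂, c₃, rfl, hc₂, rfl⟩ := List.map_eq_append_iff.1 hc₂₃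
    refine ⟨c₁ ++ .node r.input c₂ :: c₃, by simp [root], by simp [yield], ?_⟩
    simp only [List.mem_append, List.mem_cons] at hsub ⊢
    rintro b (hb | rfl | hb)
    · exact hsub b (.inl hb)
    · exact .node r c₂ hr hc₂ fun b hb => hsub b (.inr (.inl hb))
    · exact hsub b (.inr (.inr hb))

theorem mem_language_iff_exists_parseTree {w : List T} :
    w ∈ g.language ↔
      ∃ t, g.IsParseTree t ∧ t.root = .nonterminal g.initial ∧ t.yield = w := by
  refine ⟨fun h => ?_, fun ⟨t, ht, hroot, hyield⟩ => ?_⟩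
  · obtain ⟨c, hc, rfl, hsub⟩ := exists_parseTrees_of_derives h
    obtain ⟨t, rfl, hroot⟩ := List.map_eq_singleton_iff.1 hc
    exact ⟨t, hsub t (by simp), hroot, by simp⟩
  · rw [mem_language_iff, ← hroot, ← hyield]
    exact ht.derives

theorem IsParseTree.length_yield_le {K : ℕ} (hK : 1 ≤ K)
    (hrules : ∀ r ∈ g.rules, r.output.length ≤ K) (ht : g.IsParseTree t) :
    t.yield.length ≤ K ^ t.height := by
  induction ht with
  | leaf => simp [yield, height]
  | node r c hr hc _ ih =>
    set H := (c.map height).foldr max 0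
    have hchild : ∀ b ∈ c, b.yield.length ≤ K ^ H := fun b hb => (ih b hb).trans
      (Nat.pow_le_pow_right hK (List.foldr_max_le_iff.1 le_rfl _ (List.mem_map_of_mem hb)))
    have hlen : c.length ≤ K := by simpa [← hc] using hrules r hr
    calc (ParseTree.node r.input c).yield.length = (c.map fun b => b.yield.length).sum := by
          simp [yield, List.length_flatten, Function.comp_def]
      _ ≤ c.length * K ^ H := by
          simpa using List.sum_le_card_nsmul (c.map fun b => b.yield.length) (K ^ H)
            (by simpa using hchild)
      _ ≤ K * K ^ H := Nat.mul_le_mul_right _ hlen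
      _ = K ^ (ParseTree.node r.input c).height := by simp [height, H, pow_succ, mul_comm]

/-- `s` sits in `t` between the words `u` and `z`, and can be exchanged for any parse tree with the
same root. -/
def Replaceable (g : ContextFreeGrammar T) (t s : ParseTree T g.NT) (u z : List T) : Prop :=
  t.yield = u ++ s.yield ++ z ∧
    ∀ s', g.IsParseTree s' → s'.root = s.root →
      ∃ t', g.IsParseTree t' ∧ t'.root = t.root ∧ t'.yield = u ++ s'.yield ++ z ∧
        t'.size + s.size = t.size + s'.size

theorem Replaceable.refl (t : ParseTree T g.NT) : g.Replaceable t t [] [] :=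
  ⟨by simp, fun s' hs' hroot => ⟨s', hs', hroot, by simp, by omega⟩⟩

theorem Replaceable.trans {r : ParseTree T g.NT} {u z u' z' : List T}
    (h₁ : g.Replaceable t s u z) (h₂ : g.Replaceable s r u' z') :
    g.Replaceable t r (u ++ u') (z' ++ z) := by
  refine ⟨by simp [h₁.1, h₂.1], fun r' hr' hroot => ?_⟩
  obtain ⟨s', hs', hsroot, hsyield, hssize⟩ := h₂.2 r' hr' hroot
  obtain ⟨t', ht', htroot, htyield, htsize⟩ := h₁.2 s' hs' hsroot
  exact ⟨t', ht', htroot, by simp [htyield, hsyield], by omega⟩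

theorem IsParseTree.replaceable_of_isChild (ht : g.IsParseTree t) (h : IsChild s t) :
    ∃ u z, g.Replaceable t s u z := by
  obtain ⟨n, _, rfl, hs⟩ := h
  obtain ⟨c₁, c₂, rfl⟩ := List.append_of_mem hs
  cases ht with
  | node r _ hr hc hsub =>
    refine ⟨(c₁.map yield).flatten, (c₂.map yield).flatten, by simp [yield], ?_⟩
    intro s' hs' hroot
    refine ⟨.node r.input (c₁ ++ s' :: c₂), .node r _ hr (by simpa [hroot] using hc) ?_, rfl,
      by simp [yield],
      by simp only [size, List.map_append, List.map_cons, List.sum_append, List.sum_cons]; omega⟩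
    simp only [List.mem_append, List.mem_cons] at hsub ⊢
    rintro b (hb | rfl | hb)
    · exact hsub b (.inl hb)
    · exact hs'
    · exact hsub b (.inr (.inr hb))

theorem IsParseTree.replaceable_of_reflTransGen (ht : g.IsParseTree t)
    (h : ReflTransGen IsChild s t) : ∃ u z, g.Replaceable t s u z := by
  induction h with
  | refl => exact ⟨[], [], .refl _⟩
  | tail hsb hbt ih =>
    obtain ⟨u, z, hbt'⟩ := ht.replaceable_of_isChild hbt
    obtain ⟨u', z', hsb'⟩ := ih (ht.of_isChild hbt)
    exact ⟨_, _, hbt'.trans hsb'⟩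

theorem Replaceable.pump {v y : List T} (h : g.Replaceable t s v y) (hs : g.IsParseTree s)
    (hroot : s.root = t.root) (i : ℕ) :
    ∃ t', g.IsParseTree t' ∧ t'.root = t.root ∧
      t'.yield = (List.replicate i v).flatten ++ s.yield ++ (List.replicate i y).flatten := by
  induction i with
  | zero => exact ⟨s, hs, hroot, by simp⟩
  | succ i ih =>
    obtain ⟨t', ht', hroot', hyield'⟩ := ih
    obtain ⟨t'', ht'', hroot'', hyield'', -⟩ := h.2 t' ht' (hroot'.trans hroot.symm)
    refine ⟨t'', ht'', hroot'', ?_⟩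
    rw [List.replicate_succ, List.replicate_succ']
    simp [hyield'', hyield']

theorem IsParseTree.exists_repeat [DecidableEq g.NT] (ht : g.IsParseTree t)
    (hheight : (g.rules.image ContextFreeRule.input).card < t.height) :
    ∃ t₁ t₂, ReflTransGen IsChild t₁ t ∧ TransGen IsChild t₂ t₁ ∧ t₂.root = t₁.root ∧
      t₁.height ≤ (g.rules.image ContextFreeRule.input).card + 1 := by
  set m := (g.rules.image ContextFreeRule.input).card
  obtain ⟨t₀, ht₀, hheight₀⟩ := exists_reflTransGen_height_eq m.succ_pos t hheight
  have hlabel : ∀ n c, ReflTransGen IsChild (.node n c) t₀ →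
      n ∈ g.rules.image ContextFreeRule.input := by
    intro n c h
    obtain ⟨r, hr, rfl⟩ := ((ht.of_reflTransGen ht₀).of_reflTransGen h).exists_rule
    exact Finset.mem_image_of_mem _ hr
  by_contra! hnorep
  have := height_le_card _ t₀ hlabel fun t₁ t₂ h₁ h₂ hroot =>
    (hnorep t₁ t₂ (h₁.trans ht₀) h₂ hroot).not_ge ((height_le_of_reflTransGen h₁).trans hheight₀.le)
  omega

theorem exists_minimal_parseTree {w : List T} (hw : w ∈ g.language) :
    ∃ t, g.IsParseTree t ∧ t.root = .nonterminal g.initial ∧ t.yield = w ∧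
      ∀ t', g.IsParseTree t' → t'.root = t.root → t'.yield = w → t.size ≤ t'.size := by
  obtain ⟨t, ⟨ht, hroot, hyield⟩, hmin⟩ := (InvImage.wf size wellFounded_lt).has_min
    {t | g.IsParseTree t ∧ t.root = .nonterminal g.initial ∧ t.yield = w}
    (mem_language_iff_exists_parseTree.1 hw)
  exact ⟨t, ht, hroot, hyield, fun t' ht' hroot' hyield' =>
    not_lt.1 (hmin t' ⟨ht', hroot'.trans hroot, hyield'⟩)⟩

theorem exists_pumping (g : ContextFreeGrammar T) :
    ∃ p, ∀ w ∈ g.language, p ≤ w.length →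
      ∃ u v x y z, w = u ++ v ++ x ++ y ++ z ∧ (v ++ x ++ y).length ≤ p ∧ v ++ y ≠ [] ∧
        ∀ i, u ++ (List.replicate i v).flatten ++ x ++ (List.replicate i y).flatten ++ z ∈
          g.language := by
  classical
  set K := max 2 (g.rules.sup fun r => r.output.length)
  have hrules : ∀ r ∈ g.rules, r.output.length ≤ K := fun r hr =>
    (Finset.le_sup (f := fun r => r.output.length) hr).trans (le_max_right _ _)
  set m := (g.rules.image ContextFreeRule.input).card
  refine ⟨K ^ (m + 1), fun w hw hlen => ?_⟩
  obtain ⟨t, ht, hroot, rfl, hmin⟩ := exists_minimal_parseTree hw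
  have hheight : m < t.height := by
    by_contra! h
    have := (ht.length_yield_le (by omega) hrules).trans (Nat.pow_le_pow_right (by omega) h)
    have : K ^ m < K ^ (m + 1) := Nat.pow_lt_pow_right (by omega) (by omega)
    omega
  obtain ⟨t₁, t₂, h₁, h₂, hroot₂, hheight₁⟩ := ht.exists_repeat hheight
  have ht₁ := ht.of_reflTransGen h₁
  have ht₂ := ht₁.of_reflTransGen h₂.to_reflTransGen
  obtain ⟨u, z, hout⟩ := ht.replaceable_of_reflTransGen h₁
  obtain ⟨v, y, hin⟩ := ht₁.replaceable_of_reflTransGen h₂.to_reflTransGen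
  refine ⟨u, v, t₂.yield, y, z, by simp [hout.1, hin.1], ?_, ?_, fun i => ?_⟩
  · calc (v ++ t₂.yield ++ y).length = t₁.yield.length := by rw [hin.1]
      _ ≤ K ^ t₁.height := ht₁.length_yield_le (by omega) hrules
      _ ≤ K ^ (m + 1) := Nat.pow_le_pow_right (by omega) hheight₁
  · intro hvy
    obtain ⟨rfl, rfl⟩ := List.append_eq_nil_iff.1 hvy
    obtain ⟨t', ht', hroot', hyield', hsize'⟩ := hout.2 t₂ ht₂ hroot₂
    have := hmin t' ht' hroot' (by simpa [hout.1, hin.1] using hyield')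
    have := size_lt_of_transGen h₂
    omega
  · obtain ⟨t', ht', hroot', hyield'⟩ := hin.pump ht₂ hroot₂ i
    obtain ⟨t'', ht'', hroot'', hyield'', -⟩ := hout.2 t' ht' hroot'
    exact mem_language_iff_exists_parseTree.2
      ⟨t'', ht'', hroot''.trans hroot, by simp [hyield'', hyield']⟩

end ContextFreeGrammar

theorem Language.IsContextFree.exists_pumping {T : Type*} {L : Language T}
    (hL : L.IsContextFree) :
    ∃ p, ∀ w ∈ L, p ≤ w.length →
      ∃ u v x y z, w = u ++ v ++ x ++ y ++ z ∧ (v ++ x ++ y).length ≤ p ∧ v ++ y ≠ [] ∧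
        ∀ i, u ++ (List.replicate i v).flatten ++ x ++ (List.replicate i y).flatten ++ z ∈ L := by
  obtain ⟨g, rfl⟩ := hL
  exact g.exists_pumping

section PrefixNormal

open List

theorem isPrefixNormal1_iff {w : List Bool} :
    IsPrefixNormal1 w ↔ ∀ i L, i + L ≤ w.length →
      (w.take i).count false + (w.take L).count false ≤ (w.take (i + L)).count false := by
  constructor
  · intro h i L hiL
    set f := (w.take (i + L)).drop i
    have hsplit : w.take (i + L) = w.take i ++ f := by
      rw [← take_append_drop i (w.take (i + L)), take_take, min_eq_left (by omega)]
    have hlen : f.length = L := by simp only [length_drop, length_take, f]; omega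
    have hnormal := h f ⟨w.take i, w.drop (i + L), by rw [← hsplit, take_append_drop]⟩
    have hf := count_true_add_count_false f
    have hprefix := count_true_add_count_false (w.take L)
    rw [hsplit, count_append]
    rw [hlen] at hnormal hf
    rw [length_take] at hprefix
    omega
  · rintro h v ⟨s, t, rfl⟩
    have hsv := h s.length v.length (by simp)
    rw [append_assoc, take_left, ← length_append, ← append_assoc, take_left, count_append] at hsv
    have := count_true_add_count_false v
    have := count_true_add_count_false ((s ++ v ++ t).take v.length)
    simp only [length_take, length_append] at this
    omega

theorem count_false_take_replicate_true (a k : ℕ) :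
    ((replicate a true).take k).count false = 0 := by
  simp [take_replicate, count_replicate]

theorem count_false_take_replicate_true_append (a k : ℕ) (s : List Bool) :
    ((replicate a true ++ false :: s).take k).count false =
      min 1 (k - a) + (s.take (k - a - 1)).count false := by
  rw [take_append, count_append, count_false_take_replicate_true, length_replicate]
  rcases Nat.eq_zero_or_pos (k - a) with h | h
  · simp [h]
  · obtain ⟨j, hj⟩ := Nat.exists_eq_add_of_lt h
    simp only [hj, zero_add, take_succ_cons, count_cons_self, add_tsub_cancel_right]
    omega

theorem IsPrefixNormal1.second_run_le {a b : ℕ}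
    (h : IsPrefixNormal1 (replicate a true ++ false :: replicate b true)) : b ≤ a := by
  have := isPrefixNormal1_iff.1 h (a + 1) b 
    (by simp only [length_append, length_replicate, length_cons]; omega)
  simp only [count_false_take_replicate_true_append, count_false_take_replicate_true] at this
  omega

theorem IsPrefixNormal1.later_runs_le {a b c : ℕ}
    (h : IsPrefixNormal1
      (replicate a true ++ false :: (replicate b true ++ false :: replicate c true))) :
    b ≤ a ∧ c ≤ a := by
  have hb := isPrefixNormal1_iff.1 h (a + 1) b 
    (by simp only [length_append, length_replicate, length_cons]; omega)
  have hc := isPrefixNormal1_iff.1 h (a + b + 2) c 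
    (by simp only [length_append, length_replicate, length_cons]; omega)
  simp only [count_false_take_replicate_true_append, count_false_take_replicate_true] at hb hc
  omega

theorem IsPrefixNormal1.last_two_runs_le {a b c d : ℕ}
    (h : IsPrefixNormal1 (replicate a true ++ false ::
      (replicate b true ++ false :: (replicate c true ++ false :: replicate d true)))) :
    c + d ≤ a + b := by
  have := isPrefixNormal1_iff.1 h (a + b + 2) (c + d + 1) 
    (by simp only [length_append, length_replicate, length_cons]; omega)
  simp only [count_false_take_replicate_true_append, count_false_take_replicate_true] at this
  omega

def threeRuns (p : ℕ) : List Bool :=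
  replicate p true ++ false :: (replicate p true ++ false :: replicate p true)

theorem isPrefixNormal1_threeRuns (p : ℕ) : IsPrefixNormal1 (threeRuns p) := by
  refine isPrefixNormal1_iff.2 fun i L hiL => ?_
  simp only [threeRuns, count_false_take_replicate_true_append, count_false_take_replicate_true,
    length_append, length_replicate, length_cons] at hiL ⊢
  omega

theorem exists_eq_replicate_true_append_false_cons {s : List Bool} (h : false ∈ s) :
    ∃ a t, s = replicate a true ++ false :: t := by
  induction s with
  | nil => simp at h
  | cons b s ih =>
    cases b
    · exact ⟨0, s, rfl⟩
    · obtain ⟨a, t, rfl⟩ := ih (by simpa using h)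
      exact ⟨a + 1, t, rfl⟩

theorem eq_replicate_true_of_false_notMem {s : List Bool} (h : false ∉ s) :
    s = replicate s.length true :=
  eq_replicate_iff.2 ⟨rfl, fun b hb => by cases b <;> simp_all⟩

theorem eq_runs_of_count_false_le_two (s : List Bool) (h : s.count false ≤ 2) :
    (∃ a, s = replicate a true) ∨ (∃ a b, s = replicate a true ++ false :: replicate b true) ∨
      ∃ a b c,
        s = replicate a true ++ false :: (replicate b true ++ false :: replicate c true) := by
  by_cases h₁ : false ∈ s
  · obtain ⟨a, t, rfl⟩ := exists_eq_replicate_true_append_false_cons h₁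
    by_cases h₂ : false ∈ t
    · obtain ⟨b, t', rfl⟩ := exists_eq_replicate_true_append_false_cons h₂
      have h₃ : false ∉ t' := count_eq_zero.1 (by simpa [count_replicate] using h)
      exact .inr (.inr ⟨a, b, _, by rw [← eq_replicate_true_of_false_notMem h₃]⟩)
    · exact .inr (.inl ⟨a, _, by rw [← eq_replicate_true_of_false_notMem h₂]⟩)
  · exact .inl ⟨_, eq_replicate_true_of_false_notMem h₁⟩

theorem replicate_true_append_false_cons_inj {a b : ℕ} {s t : List Bool} :
    replicate a true ++ false :: s = replicate b true ++ false :: t ↔ a = b ∧ s = t := by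
  induction a generalizing b with
  | zero => cases b <;> simp [replicate_succ]
  | succ a ih => cases b <;> simp [replicate_succ, ih]

theorem replicate_true_append_false_cons_ne {a b : ℕ} {s : List Bool} :
    replicate a true ++ false :: s ≠ replicate b true := fun h => by
  simpa using congrArg (false ∈ ·) h

theorem replicate_append_replicate_append {α : Type*} (a b : ℕ) (x : α) (l : List α) :
    replicate a x ++ (replicate b x ++ l) = replicate (a + b) x ++ l := by
  rw [← append_assoc, replicate_append_replicate]

theorem not_pumpable_threeRuns {p : ℕ} {u v x y z : List Bool}
    (hw : threeRuns p = u ++ v ++ x ++ y ++ z) (hvxy : (v ++ x ++ y).length ≤ p)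
    (hvy : v ++ y ≠ [])
    (h₀ : IsPrefixNormal1 (u ++ x ++ z))
    (h₂ : IsPrefixNormal1 (u ++ v ++ v ++ x ++ y ++ y ++ z)) : False := by
  have hcount : (u ++ v ++ x ++ y ++ z).count false = 2 := by
    rw [← hw]
    simp [threeRuns, count_replicate]
  simp only [count_append] at hcount
  replace hvy : 0 < v.length + y.length := by
    rw [Nat.pos_iff_ne_zero, ← length_append, Ne, length_eq_zero_iff]
    exact hvy
  -- Each piece has at most three runs of ones. In run form, `hw` fixes the run lengths, and the
  -- run inequalities of prefix normal words fail for the word pumped down or up.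
  rcases eq_runs_of_count_false_le_two u (by omega) with
    ⟨_, rfl⟩ | ⟨_, _, rfl⟩ | ⟨_, _, _, rfl⟩ <;>
  rcases eq_runs_of_count_false_le_two v (by omega) with
    ⟨_, rfl⟩ | ⟨_, _, rfl⟩ | ⟨_, _, _, rfl⟩ <;>
  rcases eq_runs_of_count_false_le_two x (by omega) with
    ⟨_, rfl⟩ | ⟨_, _, rfl⟩ | ⟨_, _, _, rfl⟩ <;>
  rcases eq_runs_of_count_false_le_two y (by omega) with
    ⟨_, rfl⟩ | ⟨_, _, rfl⟩ | ⟨_, _, _, rfl⟩ <;>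
  rcases eq_runs_of_count_false_le_two z (by omega) with
    ⟨_, rfl⟩ | ⟨_, _, rfl⟩ | ⟨_, _, _, rfl⟩ <;>
  simp only [threeRuns, append_assoc, cons_append, replicate_append_replicate_append,
    replicate_append_replicate, replicate_true_append_false_cons_inj, replicate_left_inj,
    replicate_true_append_false_cons_ne, replicate_true_append_false_cons_ne.symm, and_false] at hw
  all_goals
    clear hcount
    simp only [append_assoc, cons_append, replicate_append_replicate_append,
      replicate_append_replicate, length_append, length_replicate, length_cons] at h₀ h₂ hvxy hvy
    try have := h₀.second_run_le
    try have := h₀.later_runs_le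
    try have := h₂.later_runs_le
    try have := h₂.last_two_runs_le
    omega

end PrefixNormal

theorem stmt_15 :
    ¬ Language.IsContextFree {w : List Bool | IsPrefixNormal1 w} := by
  intro hcf
  obtain ⟨p, hp⟩ := hcf.exists_pumping
  obtain ⟨u, v, x, y, z, hw, hvxy, hvy, hpump⟩ :=
    hp (threeRuns p) (isPrefixNormal1_threeRuns p) (by simp [threeRuns])
  have h₀ : IsPrefixNormal1 _ := hpump 0
  have h₂ : IsPrefixNormal1 _ := hpump 2
  exact not_pumpable_threeRuns hw hvxy hvy (by simpa using h₀) (by simpa using h₂)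
end

section
/- For n sufficiently large, the number pnw(n) of 1-prefix normal binary words of length n satisfies pnw(n) ≥ 2^{n − 4√(n log₂ n)}. -/
/-- The number of 1-prefix normal words of length `n`. -/
noncomputable def pnw (n : ℕ) : ℕ :=
  Nat.card {w : List Bool // w.length = n ∧ IsPrefixNormal1 w}

/-!
If `B₁, …, B_q` are words of length `b` with exactly `d ≤ b / 2` ones each, then
`1^t B₁ ⋯ B_q` is prefix normal as soon as `t ≥ 3b`: a prefix of length `ℓ` of `B₁ ⋯ B_q` has
between `d⌊ℓ/b⌋` and `d⌊ℓ/b⌋ + d` ones, so a factor of `B₁ ⋯ B_q` has at most about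
`d⌊ℓ/b⌋ + 2d` ones, and the leading ones make up for this excess. With `b = 2d` and
`q = ⌊n/b⌋ - 3` this gives `pnw n ≥ C(2d, d)^q ≥ (2^b / b)^q`, that is
`log₂ pnw n ≥ n - 4b - (n/b) log₂ b`. Taking `b ≈ √(n log₂ n) / 2`, and using
`log₂ b ≤ (3/4) log₂ n` for large `n`, the loss `4b + (n/b) log₂ b` is at most
`(7/2)√(n log₂ n) + 8 ≤ 4√(n log₂ n)`.
-/

open List Real Filter

theorem List.count_take_le_count_take_add_sub {α : Type*} [BEq α] (l : List α) (x : α)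
    {a c : ℕ} (h : a ≤ c) : (l.take c).count x ≤ (l.take a).count x + (c - a) := by
  obtain ⟨k, rfl⟩ := Nat.exists_eq_add_of_le h
  rw [take_add, count_append, Nat.add_sub_cancel_left]
  exact Nat.add_le_add_left ((count_le_length ..).trans (length_take_le ..)) _

theorem List.eq_of_flatten_eq {α : Type*} {b : ℕ} {L₁ L₂ : List (List α)}
    (h₁ : ∀ l ∈ L₁, l.length = b) (h₂ : ∀ l ∈ L₂, l.length = b)
    (hlen : L₁.length = L₂.length) (h : L₁.flatten = L₂.flatten) : L₁ = L₂ := by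
  induction L₁ generalizing L₂ with
  | nil => exact (length_eq_zero_iff.mp hlen.symm).symm
  | cons B₁ R₁ ih =>
    obtain _ | ⟨B₂, R₂⟩ := L₂
    · simp at hlen
    · rw [flatten_cons, flatten_cons] at h
      obtain ⟨rfl, hR⟩ := append_inj h ((h₁ B₁ mem_cons_self).trans (h₂ B₂ mem_cons_self).symm)
      rw [ih (fun l hl => h₁ l (mem_cons_of_mem _ hl)) (fun l hl => h₂ l (mem_cons_of_mem _ hl))
        (by simpa using hlen) hR]

def HasBalancedPrefixes (b d : ℕ) (v : List Bool) : Prop :=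
  ∀ ℓ ≤ v.length, d * (ℓ / b) ≤ (v.take ℓ).count true ∧ (v.take ℓ).count true ≤ d * (ℓ / b) + d

theorem isPrefixNormal1_of_count_take_add_le {w : List Bool}
    (h : ∀ s L, s + L ≤ w.length →
      (w.take (s + L)).count true ≤ (w.take s).count true + (w.take L).count true) :
    IsPrefixNormal1 w := by
  rintro u ⟨x, y, rfl⟩
  have hx : (x ++ u ++ y).take x.length = x := by rw [append_assoc, take_left]
  have hxu : (x ++ u ++ y).take (x.length + u.length) = x ++ u := by rw [← length_append, take_left]
  have := h x.length u.length (by simp)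
  rwa [hxu, hx, count_append, Nat.add_le_add_iff_left] at this

theorem count_take_replicate_true_append (t ℓ : ℕ) (v : List Bool) :
    ((replicate t true ++ v).take ℓ).count true = min ℓ t + (v.take (ℓ - t)).count true := by
  simp [take_append]

theorem isPrefixNormal1_replicate_true_append {b d t : ℕ} {v : List Bool}
    (hv : HasBalancedPrefixes b d v) (ht : d * (t / b) + 3 * d ≤ t) :
    IsPrefixNormal1 (replicate t true ++ v) := by
  refine isPrefixNormal1_of_count_take_add_le fun s L hsL => ?_
  simp only [count_take_replicate_true_append, length_append, length_replicate] at hsL ⊢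
  -- If `L ≤ t` or `s ≤ t` the leading ones suffice; otherwise the factor lies in `v`.
  rcases le_total L t with hLt | htL
  · have := v.count_take_le_count_take_add_sub true
      (Nat.sub_le_sub_right (Nat.le_add_right s L) t)
    omega
  rcases le_total s t with hst | hts
  · have := v.count_take_le_count_take_add_sub true
      (Nat.sub_le_sub_right (Nat.le_add_left L s) t)
    omega
  obtain ⟨a, rfl⟩ := Nat.exists_eq_add_of_le hts
  obtain ⟨c, rfl⟩ := Nat.exists_eq_add_of_le htL
  have hdiv : (a + c + t) / b ≤ a / b + c / b + t / b + 2 := by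
    have := Nat.add_div_le_div_add_div_add_one (a + c) t b
    have := Nat.add_div_le_div_add_div_add_one a c b
    omega
  have hsum := (hv (a + c + t) (by omega)).2
  have ha := (hv a (by omega)).1
  have hc := (hv c (by omega)).1
  have := Nat.mul_le_mul_left d hdiv
  simp only [Nat.mul_add] at this
  simp only [Nat.add_sub_cancel_left, show t + a + (t + c) - t = a + c + t by omega,
    min_eq_right (Nat.le_add_right _ _)]
  omega

theorem hasBalancedPrefixes_flatten {b d : ℕ} (hb : 0 < b) {L : List (List Bool)}
    (hL : ∀ l ∈ L, l.length = b ∧ l.count true = d) : HasBalancedPrefixes b d L.flatten := by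
  induction L with
  | nil => intro ℓ hℓ; simp_all
  | cons B R ih =>
    intro ℓ hℓ
    obtain ⟨hBl, hBc⟩ := hL B mem_cons_self
    have hR := ih fun l hl => hL l (mem_cons_of_mem _ hl)
    rw [flatten_cons, take_append, count_append, hBl]
    rcases lt_or_ge ℓ b with hℓb | hbℓ
    · have := (take_sublist ℓ B).count_le true
      simp [Nat.div_eq_of_lt hℓb, Nat.sub_eq_zero_of_le hℓb.le]
      omega
    · rw [take_of_length_le (hBl ▸ hbℓ), hBc, Nat.div_eq_sub_div hb hbℓ]
      have := hR (ℓ - b) (by rw [flatten_cons, length_append, hBl] at hℓ; omega)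
      rw [Nat.mul_add_one]
      omega

def boolBlock {b : ℕ} (S : Finset (Fin b)) : List Bool := List.ofFn fun j => decide (j ∈ S)

theorem length_boolBlock {b : ℕ} (S : Finset (Fin b)) : (boolBlock S).length = b := by
  simp [boolBlock]

theorem count_boolBlock {b : ℕ} (S : Finset (Fin b)) : (boolBlock S).count true = S.card := by
  rw [boolBlock, ← Multiset.coe_count, ← Fin.univ_val_map, Multiset.count_map]
  simp only [true_eq_decide_iff]
  exact congrArg Finset.card (Finset.filter_univ_mem S)

theorem boolBlock_injective (b : ℕ) : Function.Injective (boolBlock (b := b)) := by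
  intro S T h
  ext j
  simpa using congrFun (List.ofFn_injective h) j

def blockWord {b q : ℕ} (t : ℕ) (f : Fin q → Finset (Fin b)) : List Bool :=
  replicate t true ++ (List.ofFn fun i => boolBlock (f i)).flatten

theorem length_blockWord {b q : ℕ} (t : ℕ) (f : Fin q → Finset (Fin b)) :
    (blockWord t f).length = t + q * b := by
  simp [blockWord, length_flatten, Function.comp_def, length_boolBlock]

theorem blockWord_injective (b q t : ℕ) : Function.Injective (blockWord (b := b) (q := q) t) := by
  intro f g h
  have := List.eq_of_flatten_eq (b := b) (by simp [length_boolBlock]) (by simp [length_boolBlock])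
    (by simp) (append_cancel_left h)
  funext i
  exact boolBlock_injective b (congrFun (List.ofFn_injective this) i)

theorem isPrefixNormal1_blockWord {b d q t : ℕ} (hb : 0 < b) (hdb : 2 * d ≤ b) (htb : 3 * b ≤ t)
    {f : Fin q → Finset (Fin b)} (hf : ∀ i, (f i).card = d) : IsPrefixNormal1 (blockWord t f) := by
  refine isPrefixNormal1_replicate_true_append (b := b) (d := d)
    (hasBalancedPrefixes_flatten hb ?_) ?_
  · simp [length_boolBlock, count_boolBlock, hf]
  · have := Nat.div_mul_le_self t b
    nlinarith

theorem choose_pow_le_pnw {b d q t : ℕ} (hb : 0 < b) (hdb : 2 * d ≤ b) (htb : 3 * b ≤ t) :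
    b.choose d ^ q ≤ pnw (t + q * b) := by
  have : Finite {w : List Bool // w.length = t + q * b ∧ IsPrefixNormal1 w} :=
    ((List.finite_length_eq Bool _).subset fun _ hw => hw.1).to_subtype
  calc b.choose d ^ q = Nat.card (Fin q → {S : Finset (Fin b) // S.card = d}) := by
        simp [Nat.card_eq_fintype_card, Fintype.card_finset_len]
    _ ≤ pnw (t + q * b) := Nat.card_le_card_of_injective
        (fun f => ⟨blockWord t fun i => (f i).1, length_blockWord t _,
          isPrefixNormal1_blockWord hb hdb htb fun i => (f i).2⟩)
        fun f g h => funext fun i => Subtype.ext <|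
          congrFun (blockWord_injective b q t (congrArg Subtype.val h)) i

theorem two_rpow_mul_sub_logb {b : ℕ} (hb : 0 < b) (q : ℕ) :
    (2 : ℝ) ^ (q * (b - logb 2 b)) = (2 ^ b / b) ^ q := by
  rw [mul_comm, rpow_mul zero_le_two, rpow_sub two_pos,
    rpow_logb two_pos (by norm_num) (by exact_mod_cast hb), rpow_natCast, rpow_natCast]

theorem two_pow_div_le_choose {d : ℕ} (hd : 0 < d) :
    (2 : ℝ) ^ (2 * d) / (2 * d : ℕ) ≤ (2 * d).choose d := by
  rw [div_le_iff₀ (by positivity), ← Nat.centralBinom_eq_two_mul_choose, pow_mul]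
  exact_mod_cast (Nat.four_pow_le_two_mul_self_mul_centralBinom d hd).trans_eq (mul_comm _ _)

theorem two_rpow_le_pnw {n d : ℕ} (hd : 0 < d) (hn : 3 * (2 * d) ≤ n) :
    (2 : ℝ) ^ ((n : ℝ) - 4 * (2 * d : ℕ) - n * logb 2 (2 * d : ℕ) / (2 * d : ℕ)) ≤ pnw n := by
  set b := 2 * d
  have hb : (0 : ℝ) < b := by positivity
  set q := n / b - 3
  have hq : q + 3 = n / b := Nat.sub_add_cancel ((Nat.le_div_iff_mul_le (by omega)).mpr hn)
  have hqn : q * b + 3 * b ≤ n := by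
    rw [← Nat.add_mul, hq]; exact Nat.div_mul_le_self n b
  have hqb : n ≤ q * b + 4 * b := by
    have := Nat.lt_div_mul_add (a := n) (show 0 < b by omega)
    rw [← hq] at this; linarith
  have hexp : (n : ℝ) - 4 * b - n * logb 2 b / b ≤ q * (b - logb 2 b) := by
    have hL : 0 ≤ logb 2 (b : ℝ) := logb_nonneg one_lt_two (by exact_mod_cast (show 1 ≤ b by omega))
    have h1 : (q : ℝ) * b ≤ n := by exact_mod_cast (Nat.le_add_right _ _).trans hqn
    have h2 : (n : ℝ) ≤ q * b + 4 * b := by exact_mod_cast hqb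
    have h3 : (q : ℝ) * logb 2 b ≤ n * logb 2 b / b := by
      rw [le_div_iff₀ hb]; nlinarith
    nlinarith
  calc (2 : ℝ) ^ ((n : ℝ) - 4 * b - n * logb 2 b / b) ≤ 2 ^ (q * (b - logb 2 b)) :=
        rpow_le_rpow_of_exponent_le one_le_two hexp
    _ = (2 ^ b / b) ^ q := two_rpow_mul_sub_logb (by omega) q
    _ ≤ b.choose d ^ q := by gcongr; exact two_pow_div_le_choose hd
    _ ≤ pnw n := by
        have := choose_pow_le_pnw (q := q) (t := n - q * b) (show 0 < b by omega) le_rfl (by omega)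
        rw [Nat.sub_add_cancel (by omega)] at this
        exact_mod_cast this

theorem sixteen_le_sqrt_and_four_mul_sqrt_le {n lam : ℝ} (hlam : 1 ≤ lam) (hn : 256 * lam ^ 2 ≤ n) :
    16 ≤ √(n * lam) ∧ 4 * √(n * lam) ≤ n := by
  have hs := sq_sqrt (show 0 ≤ n * lam by nlinarith)
  have hs0 := sqrt_nonneg (n * lam)
  constructor <;> nlinarith

theorem sub_four_mul_sqrt_le {n b : ℝ} (hlog : 1 ≤ logb 2 n) (hn : 256 * logb 2 n ^ 2 ≤ n)
    (hb₁ : √(n * logb 2 n) / 2 ≤ b) (hb₂ : b ≤ √(n * logb 2 n) / 2 + 2) :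
    n - 4 * √(n * logb 2 n) ≤ n - 4 * b - n * logb 2 b / b := by
  set lam := logb 2 n
  set s := √(n * lam)
  have hs2 : s ^ 2 = n * lam := sq_sqrt (by nlinarith)
  have hs := (sixteen_le_sqrt_and_four_mul_sqrt_le hlog hn).1
  have hb : 0 < b := by linarith
  have hb4 : b ^ 4 ≤ n ^ 3 := calc
    b ^ 4 ≤ s ^ 4 := by gcongr; linarith
    _ = n ^ 2 * lam ^ 2 := by rw [show s ^ 4 = (s ^ 2) ^ 2 by ring, hs2]; ring
    _ ≤ n ^ 3 := by nlinarith
  have hlogb : logb 2 b ≤ 3 / 4 * lam := by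
    have := logb_le_logb_of_le one_lt_two (by positivity) hb4
    rw [logb_pow, logb_pow] at this
    push_cast at this
    linarith
  have : n * logb 2 b / b ≤ 3 / 2 * s := by
    rw [div_le_iff₀ hb]
    nlinarith
  linarith

theorem eventually_one_le_logb_and_sq_le :
    ∀ᶠ x : ℝ in atTop, 1 ≤ logb 2 x ∧ 256 * logb 2 x ^ 2 ≤ x := by
  have hlog2 : 0 < log 2 := log_pos one_lt_two
  have hbound := (isLittleO_pow_log_id_atTop (n := 2)).bound (c := log 2 ^ 2 / 256) (by positivity)
  filter_upwards [hbound, eventually_ge_atTop 2] with x hx h2x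
  refine ⟨(le_logb_iff_rpow_le one_lt_two (by linarith)).mpr (by simpa using h2x), ?_⟩
  rw [norm_pow, norm_of_nonneg (log_nonneg (by linarith)), id, norm_of_nonneg (by linarith)] at hx
  rw [logb, div_pow, mul_div_assoc', div_le_iff₀ (by positivity)]
  linarith

theorem stmt_18 :
    ∃ N : ℕ, ∀ n ≥ N,
      (2 : ℝ) ^ ((n : ℝ) - 4 * Real.sqrt ((n : ℝ) * Real.logb 2 n)) ≤ (pnw n : ℝ) := by
  obtain ⟨N, hN⟩ := eventually_atTop.mp
    (tendsto_natCast_atTop_atTop.eventually eventually_one_le_logb_and_sq_le)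
  refine ⟨N, fun n hn => ?_⟩
  obtain ⟨hlog, hsq⟩ := hN n hn
  set s := √((n : ℝ) * logb 2 n)
  obtain ⟨hs, hsn⟩ := sixteen_le_sqrt_and_four_mul_sqrt_le hlog hsq
  set d := ⌈s / 4⌉₊
  have hd₁ : s / 4 ≤ d := Nat.le_ceil _
  have hd₂ : (d : ℝ) < s / 4 + 1 := Nat.ceil_lt_add_one (by positivity)
  have hd : 0 < d := by exact_mod_cast (show (0 : ℝ) < d by linarith)
  have hdn : 3 * (2 * d) ≤ n := by exact_mod_cast (show (3 * (2 * d) : ℝ) ≤ n by linarith)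
  calc (2 : ℝ) ^ ((n : ℝ) - 4 * s)
      ≤ 2 ^ ((n : ℝ) - 4 * (2 * d : ℕ) - n * logb 2 (2 * d : ℕ) / (2 * d : ℕ)) :=
        rpow_le_rpow_of_exponent_le one_le_two
          (sub_four_mul_sqrt_le hlog hsq (by push_cast; linarith) (by push_cast; linarith))
    _ ≤ pnw n := two_rpow_le_pnw hd hdn
end

section
/- Let v and w be distinct 1-prefix normal words both starting with 1. Then their extension languages differ: there exists a word u such that exactly one of v·u and w·u is 1-prefix normal. -/
def prefixOnes (x : List Bool) (n : ℕ) : ℕ := (x.take n).count true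

@[simp]
theorem prefixOnes_zero (x : List Bool) : prefixOnes x 0 = 0 := by
  simp [prefixOnes]

theorem prefixOnes_append (x y : List Bool) (n : ℕ) :
    prefixOnes (x ++ y) n = prefixOnes x n + prefixOnes y (n - x.length) := by
  rw [prefixOnes, List.take_append, List.count_append, prefixOnes, prefixOnes]

@[simp]
theorem prefixOnes_replicate_false (a n : ℕ) : prefixOnes (List.replicate a false) n = 0 := by
  simp [prefixOnes, List.take_replicate, List.count_replicate]

theorem prefixOnes_of_length_le {x : List Bool} {n : ℕ} (h : x.length ≤ n) :
    prefixOnes x n = x.count true := by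
  rw [prefixOnes, List.take_of_length_le h]

theorem prefixOnes_mono (x : List Bool) : Monotone (prefixOnes x) := fun _ _ h =>
  (List.take_sublist_take_left h).count_le true

theorem prefixOnes_take (x : List Bool) (k n : ℕ) :
    prefixOnes (x.take k) n = prefixOnes x (min n k) := by
  rw [prefixOnes, List.take_take, prefixOnes]

theorem prefixOnes_le_append (x y : List Bool) (n : ℕ) :
    prefixOnes x n ≤ prefixOnes (x ++ y) n := by
  rw [prefixOnes_append]
  exact Nat.le_add_right _ _

theorem isPrefixNormal1_iff_s19 {x : List Bool} :
    IsPrefixNormal1 x ↔ ∀ m n, prefixOnes x (m + n) ≤ prefixOnes x m + prefixOnes x n := by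
  constructor
  · intro hx m n
    have hsplit : prefixOnes x (m + n) = prefixOnes x m + ((x.drop m).take n).count true := by
      rw [prefixOnes, List.take_add, List.count_append, prefixOnes]
    have hinf : (x.drop m).take n <:+: x :=
      (List.take_prefix _ _).isInfix.trans (List.drop_suffix _ _).isInfix
    rw [hsplit]
    exact Nat.add_le_add_left ((hx _ hinf).trans (prefixOnes_mono x (List.length_take_le _ _))) _
  · rintro hx g ⟨s, t, rfl⟩
    have hs : prefixOnes (s ++ g ++ t) s.length = s.count true := by
      simp [prefixOnes_append, prefixOnes_of_length_le]
    have hsg : prefixOnes (s ++ g ++ t) (s.length + g.length) = s.count true + g.count true := by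
      simp [prefixOnes_append, prefixOnes_of_length_le]
    have := hx s.length g.length
    rw [hs, hsg] at this
    exact Nat.le_of_add_le_add_left this

theorem IsPrefixNormal1.take {x : List Bool} (hx : IsPrefixNormal1 x) (k : ℕ) :
    IsPrefixNormal1 (x.take k) := by
  rw [isPrefixNormal1_iff_s19] at hx ⊢
  intro m n
  simp only [prefixOnes_take]
  exact (prefixOnes_mono x (by omega)).trans (hx (min m k) (min n k))

theorem isPrefixNormal1_append_replicate_append {x z : List Bool} {a : ℕ}
    (hx : IsPrefixNormal1 x) (hz : IsPrefixNormal1 z) (ha : x.length ≤ a)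
    (hdom : ∀ n, prefixOnes z n ≤ prefixOnes (x ++ List.replicate a false ++ z) n) :
    IsPrefixNormal1 (x ++ List.replicate a false ++ z) := by
  set M := x.length + a
  have hsplit : ∀ n, prefixOnes (x ++ List.replicate a false ++ z) n =
      prefixOnes x n + prefixOnes z (n - M) := by
    intro n
    simp [prefixOnes_append, Nat.sub_sub, M]
  have hconst : ∀ m n, x.length ≤ n → prefixOnes x (m + n) = prefixOnes x n := fun m n h => by
    rw [prefixOnes_of_length_le h, prefixOnes_of_length_le (by omega)]
  rw [isPrefixNormal1_iff_s19] at hx hz ⊢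
  simp only [hsplit] at hdom ⊢
  intro m n
  have hcross : ∀ m n, prefixOnes z (m + n - M) ≤
      prefixOnes x m + prefixOnes z (m - M) + prefixOnes z (n - M) := fun m n =>
    calc prefixOnes z (m + n - M) ≤ prefixOnes z (m + (n - M)) := prefixOnes_mono z (by omega)
      _ ≤ prefixOnes z m + prefixOnes z (n - M) := hz _ _
      _ ≤ _ := Nat.add_le_add_right (hdom m) _
  by_cases hshort : m + n ≤ M
  · rw [Nat.sub_eq_zero_of_le hshort]
    linarith [hx m n, prefixOnes_mono z (Nat.zero_le (m - M))]
  · -- `m + n > |x| + a ≥ 2|x|`, so `m` or `n` is at least `|x|`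
    rcases le_or_gt x.length n with hn | hn
    · linarith [hconst m n hn, hcross m n]
    · rw [add_comm m n]
      linarith [hconst n m (by omega), hcross n m]

theorem isPrefixNormal1_append_replicate_append_take {x : List Bool} {a : ℕ}
    (hx : IsPrefixNormal1 x) (ha : x.length ≤ a) (k : ℕ) :
    IsPrefixNormal1 (x ++ List.replicate a false ++ x.take k) :=
  isPrefixNormal1_append_replicate_append hx (hx.take k) ha fun n =>
    calc prefixOnes (x.take k) n = prefixOnes x (min n k) := prefixOnes_take x k n
      _ ≤ prefixOnes x n := prefixOnes_mono x (min_le_left n k)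
      _ ≤ _ := by
        rw [List.append_assoc]
        exact prefixOnes_le_append _ _ _

theorem exists_extension_of_prefixOnes_lt {x y : List Bool} (hx : IsPrefixNormal1 x) {k : ℕ}
    (hk : prefixOnes y k < prefixOnes x k) :
    ∃ u, IsPrefixNormal1 (x ++ u) ∧ ¬ IsPrefixNormal1 (y ++ u) := by
  set a := max x.length y.length
  refine ⟨List.replicate a false ++ x.take k, ?_, fun hy => ?_⟩
  · rw [← List.append_assoc]
    exact isPrefixNormal1_append_replicate_append_take hx (le_max_left _ _) k
  · have hlen : (x.take k).length ≤ k ∧ (x.take k).length ≤ a := by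
      simp only [List.length_take]
      omega
    have hpre : prefixOnes (y ++ (List.replicate a false ++ x.take k)) (x.take k).length ≤
        prefixOnes y k := by
      simp only [prefixOnes_append, prefixOnes_replicate_false, List.length_replicate]
      rw [Nat.sub_eq_zero_of_le (by omega : (x.take k).length - y.length ≤ a), prefixOnes_zero]
      simpa using prefixOnes_mono y hlen.1
    have := hy (x.take k) ⟨y ++ List.replicate a false, [], by simp⟩
    exact absurd (this.trans hpre) (not_le.mpr hk)

theorem exists_extension_not_append_replicate {x : List Bool} (hx : IsPrefixNormal1 x)
    (hx1 : x.head? = some true) {j : ℕ} (hj : 0 < j) :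
    ∃ u, IsPrefixNormal1 (x ++ u) ∧ ¬ IsPrefixNormal1 (x ++ List.replicate j false ++ u) := by
  have htake : x.take 1 = [true] := by simp [List.take_one, hx1]
  set N := x.length
  set z := x ++ List.replicate N false ++ [true]
  have hz : IsPrefixNormal1 z := by
    simpa only [htake] using isPrefixNormal1_append_replicate_append_take hx le_rfl 1
  refine ⟨List.replicate N false ++ z, ?_, fun hy => ?_⟩
  · rw [← List.append_assoc]
    refine isPrefixNormal1_append_replicate_append hx hz le_rfl fun n => ?_
    rw [prefixOnes_append (x ++ List.replicate N false) [true],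
      prefixOnes_append (x ++ List.replicate N false) z]
    refine Nat.add_le_add_left ?_ _
    calc prefixOnes [true] _ = prefixOnes x (min _ 1) := by rw [← htake, prefixOnes_take]
      _ ≤ _ := prefixOnes_mono x (min_le_left _ _)
      _ ≤ _ := by simpa only [z, List.append_assoc] using prefixOnes_le_append x _ _
  · have hpre : prefixOnes (x ++ List.replicate j false ++ (List.replicate N false ++ z))
        z.length = x.count true := by
      have hj' : N + 1 - j - N = 0 := by omega
      simp [z, prefixOnes_append, prefixOnes_of_length_le, hj']
    have hsuffix : z <:+: x ++ List.replicate j false ++ (List.replicate N false ++ z) :=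
      ⟨x ++ List.replicate j false ++ List.replicate N false, [], by
        simp only [List.append_assoc, List.append_nil]⟩
    have hcount : z.count true = x.count true + 1 := by simp [z, List.count_replicate]
    have := hy z hsuffix
    rw [← prefixOnes, hpre, hcount] at this
    omega

theorem eq_append_replicate_of_prefixOnes_eq {x y : List Bool}
    (h : ∀ n, prefixOnes x n = prefixOnes y n) (hle : x.length ≤ y.length) :
    y = x ++ List.replicate (y.length - x.length) false := by
  induction x generalizing y with
  | nil =>
    have hcount : y.count true = 0 := by
      rw [← prefixOnes_of_length_le le_rfl, ← h]
      simp [prefixOnes]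
    rw [List.nil_append, List.length_nil, Nat.sub_zero, List.eq_replicate_iff]
    refine ⟨rfl, fun b hb => ?_⟩
    cases b
    · rfl
    · exact absurd hb (List.count_eq_zero.mp hcount)
  | cons b x ih =>
    obtain _ | ⟨c, y⟩ := y
    · simp at hle
    have hbc : b = c := by
      have := h 1
      cases b <;> cases c <;> first | rfl | simp [prefixOnes] at this
    subst hbc
    have htail : ∀ n, prefixOnes x n = prefixOnes y n := fun n => by
      have := h (n + 1)
      simp only [prefixOnes, List.take_succ_cons, List.count_cons] at this
      exact Nat.add_right_cancel this
    have hxy : y = x ++ List.replicate (y.length - x.length) false :=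
      ih htail (by simpa using hle)
    simp [← hxy]

theorem stmt_19 (v w : List Bool) (hv : IsPrefixNormal1 v) (hw : IsPrefixNormal1 w)
    (hv1 : v.head? = some true) (hw1 : w.head? = some true) (hne : v ≠ w) :
    ∃ u : List Bool, Xor' (IsPrefixNormal1 (v ++ u)) (IsPrefixNormal1 (w ++ u)) := by
  by_cases hC : ∀ n, prefixOnes v n = prefixOnes w n
  · rcases lt_trichotomy v.length w.length with hlt | heq | hgt
    · obtain ⟨u, hvu, hwu⟩ := exists_extension_not_append_replicate hv hv1 (Nat.sub_pos_of_lt hlt)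
      rw [← eq_append_replicate_of_prefixOnes_eq hC hlt.le] at hwu
      exact ⟨u, Or.inl ⟨hvu, hwu⟩⟩
    · have := eq_append_replicate_of_prefixOnes_eq hC heq.le
      simp only [heq, Nat.sub_self, List.replicate_zero, List.append_nil] at this
      exact absurd this.symm hne
    · obtain ⟨u, hwu, hvu⟩ := exists_extension_not_append_replicate hw hw1 (Nat.sub_pos_of_lt hgt)
      rw [← eq_append_replicate_of_prefixOnes_eq (fun n => (hC n).symm) hgt.le] at hvu
      exact ⟨u, Or.inr ⟨hwu, hvu⟩⟩
  · obtain ⟨k, hk⟩ := not_forall.mp hC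
    rcases Nat.lt_or_gt_of_ne hk with hlt | hgt
    · obtain ⟨u, hwu, hvu⟩ := exists_extension_of_prefixOnes_lt hw hlt
      exact ⟨u, Or.inr ⟨hwu, hvu⟩⟩
    · obtain ⟨u, hvu, hwu⟩ := exists_extension_of_prefixOnes_lt hv hgt
      exact ⟨u, Or.inl ⟨hvu, hwu⟩⟩
end
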